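/- Let X and Y be two real-valued random variables defined on the same probability space. Then for any real numbers a ≤ b, P(a ≤ X ≤ b) ≤ (1/2)·(1 + P(|X − Y| ≤ b − a) + d_TV(L_X, L_Y)), where L_X and L_Y denote the laws of X and Y. -/

import Mathlib

/-!
Let `A = {X ∈ [a, b]}` and `B = {Y ∈ [a, b]}`. On `A ∩ B` both values lie in `[a, b]`, so
`|X − Y| ≤ b − a`; hence `P A + P B = P (A ∪ B) + P (A ∩ B) ≤ 1 + P(|X − Y| ≤ b − a)`.
Since `P A − P B = L_X [a, b] − L_Y [a, b] ≤ d_TV(L_X, L_Y)`, adding the two inequalities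
gives `2 P A ≤ 1 + P(|X − Y| ≤ b − a) + d_TV(L_X, L_Y)`.
-/

open MeasureTheory

/-- Total variation distance between two measures:
`d_TV(μ, ν) = sup over measurable sets s of |μ(s) − ν(s)|`. -/
noncomputable def tvDist {Ω : Type*} [MeasurableSpace Ω] (μ ν : Measure Ω) : ℝ :=
  ⨆ s : {s : Set Ω // MeasurableSet s}, |(μ s.1).toReal - (ν s.1).toReal|

theorem measureReal_add_measureReal_le_one_add_inter {Ω : Type*} [MeasurableSpace Ω]
    {μ : Measure Ω} [IsProbabilityMeasure μ] {s t : Set Ω} (ht : MeasurableSet t) :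
    μ.real s + μ.real t ≤ 1 + μ.real (s ∩ t) := by
  rw [← measureReal_union_add_inter ht]
  gcongr
  exact measureReal_le_one

theorem abs_measureReal_sub_le_tvDist {Ω : Type*} [MeasurableSpace Ω] {μ ν : Measure Ω}
    [IsFiniteMeasure μ] [IsFiniteMeasure ν] {s : Set Ω} (hs : MeasurableSet s) :
    |μ.real s - ν.real s| ≤ tvDist μ ν := by
  have hbdd : BddAbove (Set.range fun t : {t : Set Ω // MeasurableSet t} =>
      |μ.real t.1 - ν.real t.1|) := by
    refine ⟨μ.real Set.univ + ν.real Set.univ, ?_⟩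
    rintro _ ⟨t, rfl⟩
    have hμ := measureReal_mono (μ := μ) t.1.subset_univ
    have hν := measureReal_mono (μ := ν) t.1.subset_univ
    rw [abs_sub_le_iff]
    constructor <;> linarith [measureReal_nonneg (μ := μ) (s := t.1),
      measureReal_nonneg (μ := ν) (s := t.1)]
  exact le_ciSup hbdd ⟨s, hs⟩

theorem abs_sub_le_of_mem_Icc {a b x y : ℝ} (hx : x ∈ Set.Icc a b) (hy : y ∈ Set.Icc a b) :
    |x - y| ≤ b - a := by
  rw [abs_sub_le_iff]
  constructor <;> linarith [hx.1, hx.2, hy.1, hy.2]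

theorem stmt0_general {Ω : Type*} [MeasurableSpace Ω] (P : Measure Ω) [IsProbabilityMeasure P]
    (X Y : Ω → ℝ) (hX : Measurable X) (hY : Measurable Y)
    (a b : ℝ) :
    (P {ω | a ≤ X ω ∧ X ω ≤ b}).toReal ≤
      (1 / 2) * (1 + (P {ω | |X ω - Y ω| ≤ b - a}).toReal + tvDist (P.map X) (P.map Y)) := by
  have hsum : P.real (X ⁻¹' Set.Icc a b) + P.real (Y ⁻¹' Set.Icc a b)
      ≤ 1 + P.real {ω | |X ω - Y ω| ≤ b - a} :=
    calc _ ≤ 1 + P.real (X ⁻¹' Set.Icc a b ∩ Y ⁻¹' Set.Icc a b) :=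
          measureReal_add_measureReal_le_one_add_inter (hY measurableSet_Icc)
      _ ≤ 1 + P.real {ω | |X ω - Y ω| ≤ b - a} :=
          add_le_add le_rfl (measureReal_mono fun ω hω ↦ abs_sub_le_of_mem_Icc hω.1 hω.2)
  have hdiff : P.real (X ⁻¹' Set.Icc a b) - P.real (Y ⁻¹' Set.Icc a b)
      ≤ tvDist (P.map X) (P.map Y) := by
    rw [← map_measureReal_apply hX measurableSet_Icc, ← map_measureReal_apply hY measurableSet_Icc]
    exact (le_abs_self _).trans (abs_measureReal_sub_le_tvDist measurableSet_Icc)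
  change P.real (X ⁻¹' Set.Icc a b) ≤ 1 / 2 * (1 + P.real {ω | |X ω - Y ω| ≤ b - a} + _)
  linarith

/-- Let `X` and `Y` be two real random variables on the same probability space. Then for any
`a ≤ b`, `P(a ≤ X ≤ b) ≤ (1/2) (1 + P(|X − Y| ≤ b − a) + d_TV(L_X, L_Y))`. -/
theorem stmt0 {Ω : Type*} [MeasurableSpace Ω] (P : Measure Ω) [IsProbabilityMeasure P]
    (X Y : Ω → ℝ) (hX : Measurable X) (hY : Measurable Y)
    (a b : ℝ) (hab : a ≤ b) :
    (P {ω | a ≤ X ω ∧ X ω ≤ b}).toReal ≤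
      (1 / 2) * (1 + (P {ω | |X ω - Y ω| ≤ b - a}).toReal + tvDist (P.map X) (P.map Y)) :=
  stmt0_general P X Y hX hY a b
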